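/- Let A be a real symmetric positive definite n×n matrix with eigenvalues in [λ_min, λ_max] where 0 < C₁ε³ ≤ λ_min and λ_max ≤ C₂ε³. Suppose vectors 𝒞, Λ ∈ ℝⁿ satisfy ⟨𝒞, A𝒞⟩ + ⟨T𝒞, A𝒞⟩ = −⟨Λ, A𝒞⟩ where T is a linear map such that |⟨T𝒞, A𝒞⟩| ≤ K·d⁻³·⟨A𝒞, A𝒞⟩ for all 𝒞. If K·C₂·ε³·d⁻³ ≤ 1/2, then ⟨𝒞, A𝒞⟩ ≤ 4⟨Λ, AΛ⟩, and consequently |𝒞|² ≤ 4·(C₂/C₁)·|Λ|². -/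
import Mathlib

open Matrix

lemma dps_nonneg {n : ℕ} (x : Fin n → ℝ) : 0 ≤ x ⬝ᵥ x :=
  Finset.sum_nonneg fun i _ => mul_self_nonneg (x i)

-- Cauchy-Schwarz for a PSD symmetric quadratic form
lemma cs_psd {n : ℕ} (A : Matrix (Fin n) (Fin n) ℝ)
    (hsym : ∀ u v : Fin n → ℝ, u ⬝ᵥ A.mulVec v = v ⬝ᵥ A.mulVec u)
    (hpos : ∀ x : Fin n → ℝ, 0 ≤ x ⬝ᵥ A.mulVec x) (u v : Fin n → ℝ) :
    (u ⬝ᵥ A.mulVec v) ^ 2 ≤ (u ⬝ᵥ A.mulVec u) * (v ⬝ᵥ A.mulVec v) := by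
  have key : ∀ t : ℝ, 0 ≤ (v ⬝ᵥ A.mulVec v) * (t * t) + (2 * (u ⬝ᵥ A.mulVec v)) * t
      + (u ⬝ᵥ A.mulVec u) := by
    intro t
    have h := hpos (u + t • v)
    have hexp : (u + t • v) ⬝ᵥ A.mulVec (u + t • v)
        = (v ⬝ᵥ A.mulVec v) * (t * t) + (2 * (u ⬝ᵥ A.mulVec v)) * t + (u ⬝ᵥ A.mulVec u) := by
      rw [Matrix.mulVec_add, Matrix.mulVec_smul]
      simp only [dotProduct_add, add_dotProduct, dotProduct_smul, smul_dotProduct,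
        smul_eq_mul, hsym v u]
      ring
    linarith [hexp ▸ h]
  have hd : discrim (v ⬝ᵥ A.mulVec v) (2 * (u ⬝ᵥ A.mulVec v)) (u ⬝ᵥ A.mulVec u) ≤ 0 :=
    discrim_le_zero key
  rw [discrim] at hd
  nlinarith [hd]

/-- abstract solvability estimate for the algebraic system of the
meso-scale approximation. -/
theorem stmt_3 (n : ℕ) (A : Matrix (Fin n) (Fin n) ℝ) (hA : A.IsSymm)
    (C₁ C₂ ε d K lammin lammax : ℝ)
    (hC₁ : 0 < C₁) (hε : 0 < ε) (hd : 0 < d) (hK : 0 < K)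
    (hlam1 : C₁ * ε ^ 3 ≤ lammin) (hlam2 : lammax ≤ C₂ * ε ^ 3)
    (hlow : ∀ x : Fin n → ℝ, lammin * (x ⬝ᵥ x) ≤ x ⬝ᵥ A.mulVec x)
    (hhigh : ∀ x : Fin n → ℝ, x ⬝ᵥ A.mulVec x ≤ lammax * (x ⬝ᵥ x))
    (T : (Fin n → ℝ) →ₗ[ℝ] (Fin n → ℝ))
    (hT : ∀ x : Fin n → ℝ, |(T x) ⬝ᵥ A.mulVec x| ≤ K / d ^ 3 * (A.mulVec x ⬝ᵥ A.mulVec x))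
    (𝒞 Λ : Fin n → ℝ)
    (heq : 𝒞 ⬝ᵥ A.mulVec 𝒞 + (T 𝒞) ⬝ᵥ A.mulVec 𝒞 = -(Λ ⬝ᵥ A.mulVec 𝒞))
    (hsmall : K * C₂ * ε ^ 3 / d ^ 3 ≤ 1 / 2) :
    𝒞 ⬝ᵥ A.mulVec 𝒞 ≤ 4 * (Λ ⬝ᵥ A.mulVec Λ) ∧
      𝒞 ⬝ᵥ 𝒞 ≤ 4 * (C₂ / C₁) * (Λ ⬝ᵥ Λ) := by
  have hlammin : 0 < lammin := lt_of_lt_of_le (by positivity) hlam1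
  have hsym : ∀ u v : Fin n → ℝ, u ⬝ᵥ A.mulVec v = v ⬝ᵥ A.mulVec u := by
    intro u v
    rw [Matrix.dotProduct_mulVec, ← Matrix.mulVec_transpose, hA.eq, dotProduct_comm]
  have hpos : ∀ x : Fin n → ℝ, 0 ≤ x ⬝ᵥ A.mulVec x := fun x =>
    le_trans (mul_nonneg hlammin.le (dps_nonneg x)) (hlow x)
  set p := 𝒞 ⬝ᵥ A.mulVec 𝒞 with hp
  set q := Λ ⬝ᵥ A.mulVec Λ with hq
  have hp0 : 0 ≤ p := hpos 𝒞
  have hq0 : 0 ≤ q := hpos Λ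
  set s := A.mulVec 𝒞 ⬝ᵥ A.mulVec 𝒞 with hs
  have hs0 : 0 ≤ s := dps_nonneg _
  have hcc : (0:ℝ) ≤ 𝒞 ⬝ᵥ 𝒞 := dps_nonneg 𝒞
  have hLL : (0:ℝ) ≤ Λ ⬝ᵥ Λ := dps_nonneg Λ
  -- 0 ≤ lammax * p
  have hlmp : 0 ≤ lammax * p := by
    rcases eq_or_lt_of_le hp0 with h | h
    · rw [← h]; simp
    · have hl0 : 0 ≤ lammax := by nlinarith [hhigh 𝒞, hcc]
      exact mul_nonneg hl0 hp0
  -- s ≤ lammax * p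
  have hsle : s ≤ lammax * p := by
    have hcs := cs_psd A hsym hpos 𝒞 (A.mulVec 𝒞)
    have h1 : 𝒞 ⬝ᵥ A.mulVec (A.mulVec 𝒞) = s := hsym 𝒞 (A.mulVec 𝒞)
    have h2 : A.mulVec 𝒞 ⬝ᵥ A.mulVec (A.mulVec 𝒞) ≤ lammax * s := hhigh _
    rw [h1] at hcs
    nlinarith [hcs, mul_le_mul_of_nonneg_left h2 hp0, hs0, hlmp]
  -- |T𝒞 ⬝ A𝒞| ≤ p/2
  have hTp : |(T 𝒞) ⬝ᵥ A.mulVec 𝒞| ≤ p / 2 := by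
    have h1 := hT 𝒞
    have hKd : (0:ℝ) < K / d ^ 3 := by positivity
    have h2 : K / d ^ 3 * s ≤ K / d ^ 3 * (lammax * p) :=
      mul_le_mul_of_nonneg_left hsle hKd.le
    have hlam2' : K / d ^ 3 * lammax ≤ 1 / 2 := by
      calc K / d ^ 3 * lammax ≤ K / d ^ 3 * (C₂ * ε ^ 3) :=
            mul_le_mul_of_nonneg_left hlam2 hKd.le
        _ = K * C₂ * ε ^ 3 / d ^ 3 := by ring
        _ ≤ 1 / 2 := hsmall
    have h3 : K / d ^ 3 * (lammax * p) ≤ p / 2 := by nlinarith [hlam2', hp0]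
    linarith [h1, h2, h3]
  -- p/2 ≤ -(Λ ⬝ A𝒞)
  have hhalf : p / 2 ≤ -(Λ ⬝ᵥ A.mulVec 𝒞) := by
    have := (abs_le.mp hTp).1
    linarith [heq]
  have hcs2 := cs_psd A hsym hpos Λ 𝒞
  have hmain : p ≤ 4 * q := by nlinarith [hhalf, hcs2, hp0, hq0]
  refine ⟨hmain, ?_⟩
  have h1 : lammin * (𝒞 ⬝ᵥ 𝒞) ≤ p := hlow 𝒞
  have h2 : q ≤ lammax * (Λ ⬝ᵥ Λ) := hhigh Λ
  have h4 : lammax * (Λ ⬝ᵥ Λ) ≤ C₂ * ε ^ 3 * (Λ ⬝ᵥ Λ) :=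
    mul_le_mul_of_nonneg_right hlam2 hLL
  have h5 : C₁ * ε ^ 3 * (𝒞 ⬝ᵥ 𝒞) ≤ lammin * (𝒞 ⬝ᵥ 𝒞) :=
    mul_le_mul_of_nonneg_right hlam1 hcc
  have hbig : C₁ * ε ^ 3 * (𝒞 ⬝ᵥ 𝒞) ≤ C₁ * ε ^ 3 * (4 * (C₂ / C₁) * (Λ ⬝ᵥ Λ)) := by
    have heqn : C₁ * ε ^ 3 * (4 * (C₂ / C₁) * (Λ ⬝ᵥ Λ)) = 4 * (C₂ * ε ^ 3 * (Λ ⬝ᵥ Λ)) := by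
      field_simp
    rw [heqn]
    linarith
  exact le_of_mul_le_mul_left hbig (by positivity)
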